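/- Let 1 < p ≤ ∞ with conjugate p', and 0 < q < p'. Let ρ = (ρ_j)_{j≥1} satisfy ρ_j > 1 for all j and (ρ_j^{-1})_{j≥1} ∈ ℓ_q(ℕ). Set θ := 1 − q/p' and κ_j := ρ_j^θ. Then for any family (a_ν)_{ν∈F} of nonnegative reals one has Σ_{ν∈F} κ^ν a_ν ≤ ‖(ρ^ν a_ν)_{ν∈F}‖_{ℓ_p(F)} · (Σ_{ν∈F} ρ^{−qν})^{1/p'}, and the factor (Σ_{ν∈F} ρ^{−qν})^{1/p'} is finite. In particular, any function in the class B_{ρ,p} belongs to B_{κ,1}. -/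

import Mathlib

/-!
Writing `κ^ν a_ν = (ρ^ν a_ν) · ρ^{(θ-1)ν}` and using `(θ - 1) p' = -q`, the inequality is Hölder's
inequality in `ℓ_p(F) × ℓ_{p'}(F)`. The factor is finite because `ν ↦ r^ν` with `r_j = ρ_j^{-q}`
is multiplicative: its partial sums are bounded by `∏_j (1 - r_j)⁻¹ ≤ exp (∑_j r_j / (1 - r_j))`,
which is finite since `r` is summable.
-/

open scoped BigOperators ENNReal

noncomputable section

/-- The set `F` of finitely supported multi-indices. -/
abbrev MIdx : Type := ℕ →₀ ℕ

/-- `ρ^ν := ∏_j ρ_j^{ν_j}` for a finitely supported multi-index `ν`. -/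
def mpow (ρ : ℕ → ℝ) (ν : MIdx) : ℝ := ν.prod fun j k => ρ j ^ k

/-- The `ℓ_p(F)` norm (`p ∈ [1,∞]`, valued in `ℝ≥0∞`) of a family of nonnegative reals. -/
def lpF (p : ℝ≥0∞) (a : MIdx → ℝ) : ℝ≥0∞ :=
  if p = ∞ then ⨆ ν, ENNReal.ofReal (a ν)
  else (∑' ν, ENNReal.ofReal (a ν) ^ p.toReal) ^ (1 / p.toReal)

open Finset

section mpow

variable {r : ℕ → ℝ}

lemma mpow_nonneg (h0 : ∀ j, 0 ≤ r j) (ν : MIdx) : 0 ≤ mpow r ν :=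
  prod_nonneg fun j _ => pow_nonneg (h0 j) _

lemma mpow_pos (h0 : ∀ j, 0 < r j) (ν : MIdx) : 0 < mpow r ν :=
  prod_pos fun j _ => pow_pos (h0 j) _

lemma mpow_inv (r : ℕ → ℝ) (ν : MIdx) : mpow (fun j => (r j)⁻¹) ν = (mpow r ν)⁻¹ := by
  simp only [mpow, Finsupp.prod, inv_pow, prod_inv_distrib]

lemma mpow_rpow (h0 : ∀ j, 0 ≤ r j) (θ : ℝ) (ν : MIdx) :
    mpow (fun j => r j ^ θ) ν = mpow r ν ^ θ := by
  rw [mpow, Finsupp.prod, mpow, Finsupp.prod,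
    ← Real.finsetProd_rpow _ _ fun j _ => pow_nonneg (h0 j) _]
  exact prod_congr rfl fun j _ => Real.rpow_pow_comm (h0 j) θ (ν j)

lemma sum_finsupp_mpow (s : Finset ℕ) (t : ℕ → Finset ℕ) :
    ∑ ν ∈ s.finsupp t, mpow r ν = ∏ j ∈ s, ∑ k ∈ t j, r j ^ k := by
  classical
  rw [prod_sum, Finset.finsupp, sum_map]
  refine sum_congr (by congr!) fun f _ => ?_
  exact Finsupp.prod_indicator_index_eq_prod_attach f fun j _ => pow_zero (r j)

lemma summable_div_one_sub (hs : Summable r) : Summable fun j => r j / (1 - r j) := by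
  refine Summable.of_norm_bounded_eventually_nat (hs.norm.mul_left 2) ?_
  filter_upwards [hs.tendsto_atTop_zero.eventually
    (Metric.closedBall_mem_nhds 0 (by norm_num : (0 : ℝ) < 1 / 2))] with j hj
  rw [dist_zero_right, Real.norm_eq_abs, abs_le] at hj
  have h_half : 1 / 2 ≤ 1 - r j := by linarith
  rw [norm_div, Real.norm_of_nonneg (by linarith : 0 ≤ 1 - r j), div_le_iff₀ (by linarith)]
  nlinarith [norm_nonneg (r j)]

lemma summable_mpow (h0 : ∀ j, 0 ≤ r j) (h1 : ∀ j, r j < 1) (hs : Summable r) :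
    Summable (mpow r) := by
  have hgeom (j : ℕ) : ∑' k : ℕ, r j ^ k = 1 + r j / (1 - r j) := by
    have : 1 - r j ≠ 0 := (sub_pos.2 (h1 j)).ne'
    rw [tsum_geometric_of_lt_one (h0 j) (h1 j)]
    field_simp
    ring
  have hq0 (j : ℕ) : 0 ≤ r j / (1 - r j) := div_nonneg (h0 j) (sub_pos.2 (h1 j)).le
  refine summable_of_sum_le (c := Real.exp (∑' j, r j / (1 - r j))) (mpow_nonneg h0) fun u => ?_
  classical
  set s := u.biUnion Finsupp.support
  set t : ℕ → Finset ℕ := fun j => u.image (· j)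
  have hu : u ⊆ s.finsupp t := fun ν hν => mem_finsupp_iff.2
    ⟨fun j hj => mem_biUnion.2 ⟨ν, hν, hj⟩, fun j _ => mem_image_of_mem _ hν⟩
  calc ∑ ν ∈ u, mpow r ν
      ≤ ∑ ν ∈ s.finsupp t, mpow r ν :=
        sum_le_sum_of_subset_of_nonneg hu fun ν _ _ => mpow_nonneg h0 ν
    _ = ∏ j ∈ s, ∑ k ∈ t j, r j ^ k := sum_finsupp_mpow s t
    _ ≤ ∏ j ∈ s, (1 + r j / (1 - r j)) := by
        refine prod_le_prod (fun j _ => sum_nonneg fun k _ => pow_nonneg (h0 j) k) fun j _ => ?_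
        rw [← hgeom]
        exact Summable.sum_le_tsum _ (fun k _ => pow_nonneg (h0 j) k)
          (summable_geometric_of_lt_one (h0 j) (h1 j))
    _ ≤ Real.exp (∑ j ∈ s, r j / (1 - r j)) := Real.prod_one_add_le_exp_sum s hq0
    _ ≤ Real.exp (∑' j, r j / (1 - r j)) :=
        Real.exp_le_exp.2 ((summable_div_one_sub hs).sum_le_tsum s fun j _ => hq0 j)

end mpow

lemma ENNReal.inner_le_Lp_mul_Lq_tsum {ι : Type*} (f g : ι → ℝ≥0∞) {p q : ℝ}
    (hpq : p.HolderConjugate q) :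
    ∑' i, f i * g i ≤ (∑' i, f i ^ p) ^ (1 / p) * (∑' i, g i ^ q) ^ (1 / q) := by
  let _ : MeasurableSpace ι := ⊤
  simpa only [MeasureTheory.lintegral_count, Pi.mul_apply] using
    ENNReal.lintegral_mul_le_Lp_mul_Lq (MeasureTheory.Measure.count : MeasureTheory.Measure ι) hpq
      measurable_from_top.aemeasurable measurable_from_top.aemeasurable

lemma one_sub_one_div_toReal_pos {p : ℝ≥0∞} (hp : 1 < p) : 0 < 1 - 1 / p.toReal := by
  rcases eq_or_ne p ∞ with rfl | hp_top
  · simp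
  · have hP : 1 < p.toReal := ENNReal.toReal_strict_mono hp_top hp
    exact sub_pos.2 ((div_lt_one (by linarith)).2 hP)

/-- The conjugate exponent of `p` is written `(1 - 1 / p.toReal)⁻¹`, which is `1` for `p = ∞`
because `∞.toReal = 0`. -/
lemma tsum_mul_le_lpF_mul {p : ℝ≥0∞} (hp : 1 < p) {f g : MIdx → ℝ} (hf : ∀ ν, 0 ≤ f ν)
    (hg : ∀ ν, 0 ≤ g ν) :
    ∑' ν, ENNReal.ofReal (f ν * g ν) ≤
      lpF p f * (∑' ν, ENNReal.ofReal (g ν ^ (1 - 1 / p.toReal)⁻¹)) ^ (1 - 1 / p.toReal) := by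
  simp_rw [ENNReal.ofReal_mul (hf _)]
  rcases eq_or_ne p ∞ with rfl | hp_top
  · simp only [lpF, if_true, ENNReal.toReal_top, div_zero, sub_zero, inv_one, Real.rpow_one,
      ENNReal.rpow_one, ← ENNReal.tsum_mul_left]
    refine ENNReal.tsum_le_tsum fun ν => ?_
    gcongr
    exact le_iSup (fun μ => ENNReal.ofReal (f μ)) ν
  · have hP : 1 < p.toReal := ENNReal.toReal_strict_mono hp_top hp
    have hconj : p.toReal.HolderConjugate (1 - 1 / p.toReal)⁻¹ := by
      simpa only [one_div, inv_inv] using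
        Real.HolderConjugate.inv_one_sub_inv (inv_pos.2 (by linarith)) (inv_lt_one_of_one_lt₀ hP)
    rw [lpF, if_neg hp_top]
    simp_rw [← ENNReal.ofReal_rpow_of_nonneg (hg _) (inv_pos.2 (one_sub_one_div_toReal_pos hp)).le]
    simpa only [div_inv_eq_mul, one_mul] using
      ENNReal.inner_le_Lp_mul_Lq_tsum (fun ν => ENNReal.ofReal (f ν))
        (fun ν => ENNReal.ofReal (g ν)) hconj

lemma tsum_rpow_mul_le_lpF_mul {p : ℝ≥0∞} (hp : 1 < p) {q θ : ℝ}
    (hθ : θ = 1 - q * (1 - 1 / p.toReal)) {w a : MIdx → ℝ} (hw : ∀ ν, 0 < w ν)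
    (ha : ∀ ν, 0 ≤ a ν) :
    ∑' ν, ENNReal.ofReal (w ν ^ θ * a ν) ≤
      lpF p (fun ν => w ν * a ν) *
        (∑' ν, ENNReal.ofReal ((w ν)⁻¹ ^ q)) ^ (1 - 1 / p.toReal) := by
  have hexp_ne : 1 - 1 / p.toReal ≠ 0 := (one_sub_one_div_toReal_pos hp).ne'
  have hsplit (ν : MIdx) : w ν ^ θ * a ν = w ν * a ν * w ν ^ (θ - 1) := by
    rw [Real.rpow_sub (hw ν), Real.rpow_one]
    field_simp [(hw ν).ne']
  have hdual (ν : MIdx) : (w ν ^ (θ - 1)) ^ (1 - 1 / p.toReal)⁻¹ = (w ν)⁻¹ ^ q := by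
    rw [← Real.rpow_mul (hw ν).le, Real.inv_rpow (hw ν).le, ← Real.rpow_neg (hw ν).le, hθ]
    congr 1
    field_simp
    ring
  simp_rw [hsplit, ← hdual]
  exact tsum_mul_le_lpF_mul hp (fun ν => mul_nonneg (hw ν).le (ha ν))
    fun ν => Real.rpow_nonneg (hw ν).le _

theorem kappa_embedding_general
    {X : Type*} [NormedAddCommGroup X]
    (p : ℝ≥0∞) (hp : 1 < p)
    (q : ℝ) (hq : 0 < q)
    (ρ : ℕ → ℝ) (hρ : ∀ j, 1 < ρ j)
    (hρq : Summable fun j => ((ρ j)⁻¹) ^ q)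
    (θ : ℝ) (hθ : θ = 1 - q * (1 - 1 / p.toReal))
    (κ : ℕ → ℝ) (hκ : ∀ j, κ j = ρ j ^ θ)
    (a : MIdx → ℝ) (ha : ∀ ν, 0 ≤ a ν) :
    (∑' ν : MIdx, ENNReal.ofReal (((mpow ρ ν)⁻¹) ^ q)) ≠ ∞ ∧
    (∑' ν : MIdx, ENNReal.ofReal (mpow κ ν * a ν)) ≤
      lpF p (fun ν => mpow ρ ν * a ν) *
        (∑' ν : MIdx, ENNReal.ofReal (((mpow ρ ν)⁻¹) ^ q)) ^ (1 - 1 / p.toReal) ∧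
    (∀ t : MIdx → X, lpF p (fun ν => mpow ρ ν * ‖t ν‖) ≠ ∞ →
      Summable fun ν : MIdx => mpow κ ν * ‖t ν‖) := by
  have hρ0 (j : ℕ) : 0 < ρ j := one_pos.trans (hρ j)
  have hκρ : mpow κ = fun ν => mpow ρ ν ^ θ := by
    ext ν
    rw [funext hκ, mpow_rpow fun j => (hρ0 j).le]
  have hρq_lt_one (j : ℕ) : (ρ j)⁻¹ ^ q < 1 :=
    Real.rpow_lt_one (inv_nonneg.2 (hρ0 j).le) (inv_lt_one_of_one_lt₀ (hρ j)) hq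
  have hsum : Summable fun ν => (mpow ρ ν)⁻¹ ^ q := by
    simp_rw [← mpow_inv, ← mpow_rpow fun j => inv_nonneg.2 (hρ0 j).le]
    exact summable_mpow (fun j => Real.rpow_nonneg (inv_nonneg.2 (hρ0 j).le) q) hρq_lt_one hρq
  have hineq (b : MIdx → ℝ) (hb : ∀ ν, 0 ≤ b ν) :
      ∑' ν, ENNReal.ofReal (mpow κ ν * b ν) ≤
        lpF p (fun ν => mpow ρ ν * b ν) *
          (∑' ν, ENNReal.ofReal ((mpow ρ ν)⁻¹ ^ q)) ^ (1 - 1 / p.toReal) := by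
    simpa only [hκρ] using tsum_rpow_mul_le_lpF_mul hp hθ (mpow_pos hρ0) hb
  refine ⟨hsum.tsum_ofReal_ne_top, hineq a ha, fun t ht => ?_⟩
  have hfin : ∑' ν, ENNReal.ofReal (mpow κ ν * ‖t ν‖) ≠ ∞ :=
    ne_top_of_le_ne_top (ENNReal.mul_ne_top ht (ENNReal.rpow_ne_top_of_nonneg
      (one_sub_one_div_toReal_pos hp).le hsum.tsum_ofReal_ne_top)) (hineq _ fun ν => norm_nonneg _)
  refine (ENNReal.summable_toReal hfin).congr fun ν => ENNReal.toReal_ofReal ?_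
  rw [hκρ]
  exact mul_nonneg (Real.rpow_nonneg (mpow_pos hρ0 ν).le θ) (norm_nonneg _)

/-- With `θ = 1 - q/p'` and `κ_j = ρ_j^θ`, for any nonnegative family
`(a_ν)` one has `Σ_ν κ^ν a_ν ≤ ‖(ρ^ν a_ν)‖_{ℓ_p(F)} (Σ_ν ρ^{-qν})^{1/p'}`, the factor
`(Σ_ν ρ^{-qν})^{1/p'}` being finite; in particular `B_{ρ,p} ⊆ B_{κ,1}`.
Here `1/p' = 1 - 1/p.toReal` and the condition `q < p'` is encoded by
`0 < -1 + 1/p.toReal + 1/q`. -/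
theorem kappa_embedding
    {X : Type*} [NormedAddCommGroup X] [NormedSpace ℝ X] [CompleteSpace X]
    (p : ℝ≥0∞) (hp : 1 < p)
    (q : ℝ) (hq : 0 < q) (hqp' : 0 < -1 + 1 / p.toReal + 1 / q)
    (ρ : ℕ → ℝ) (hρ : ∀ j, 1 < ρ j)
    (hρq : Summable fun j => ((ρ j)⁻¹) ^ q)
    (θ : ℝ) (hθ : θ = 1 - q * (1 - 1 / p.toReal))
    (κ : ℕ → ℝ) (hκ : ∀ j, κ j = ρ j ^ θ)
    (a : MIdx → ℝ) (ha : ∀ ν, 0 ≤ a ν) :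
    (∑' ν : MIdx, ENNReal.ofReal (((mpow ρ ν)⁻¹) ^ q)) ≠ ∞ ∧
    (∑' ν : MIdx, ENNReal.ofReal (mpow κ ν * a ν)) ≤
      lpF p (fun ν => mpow ρ ν * a ν) *
        (∑' ν : MIdx, ENNReal.ofReal (((mpow ρ ν)⁻¹) ^ q)) ^ (1 - 1 / p.toReal) ∧
    (∀ t : MIdx → X, lpF p (fun ν => mpow ρ ν * ‖t ν‖) ≠ ∞ →
      Summable fun ν : MIdx => mpow κ ν * ‖t ν‖) :=
  kappa_embedding_general p hp q hq ρ hρ hρq θ hθ κ hκ a ha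

end
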